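/- arXiv:2604.04466 — 6 statements merged into one kernel-verified Lean document; each statement's English description precedes it below -/
import Mathlib

section
/- Let G be a p-degenerate simple graph on n vertices and let h ≥ 1. Then the number of edges of G both of whose endpoints have degree at least h in G is at most 2·p²·n/h. -/
/-! Peeling off a vertex with at most `p` neighbours inside `U` shows that a `p`-degenerate graph
has at most `p·|U|` edges inside any vertex set `U`. With `U = V` there are at most `p·n` edges,
so by the handshake lemma at most `2pn/h` vertices are heavy; with `U` the heavy vertices, the
heavy edges number at most `p · 2pn/h`. -/

open Finset SimpleGraph
open scoped Classical

/-- `f : A → V` realizes a copy of `H` in `G`: it is injective and maps edges of `H`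
to edges of `G`.  The copy itself is the subgraph of `G` whose edge set is the image
of the edge set of `H`. -/
def IsCopy {A V : Type*} (H : SimpleGraph A) (G : SimpleGraph V) (f : A → V) : Prop :=
  Function.Injective f ∧ ∀ a b : A, H.Adj a b → G.Adj (f a) (f b)

/-- `G` contains a copy of `H` (a subgraph isomorphic to `H`). -/
def ContainsCopy {A V : Type*} (H : SimpleGraph A) (G : SimpleGraph V) : Prop :=
  ∃ f : A → V, IsCopy H G f

/-- The edge set of the copy of `H` in `G` realized by `f`. -/
noncomputable def copyEdges {A V : Type*} [Fintype A] [DecidableEq V]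
    (H : SimpleGraph A) (f : A → V) : Finset (Sym2 V) :=
  H.edgeFinset.image (Sym2.map f)

/-- `𝒞` is a collection of pairwise edge-disjoint copies of `H` in `G`. -/
def EdgeDisjointCopies {A V : Type*} [Fintype A] [DecidableEq V]
    (H : SimpleGraph A) (G : SimpleGraph V) (𝒞 : Finset (A → V)) : Prop :=
  (∀ f ∈ 𝒞, IsCopy H G f) ∧
    ∀ f ∈ 𝒞, ∀ g ∈ 𝒞, f ≠ g → Disjoint (copyEdges H f) (copyEdges H g)

/-- `G` is `p`-degenerate: every nonempty finite vertex set `U` contains a vertex with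
at most `p` neighbours inside `U`. -/
def Degenerate {V : Type*} (G : SimpleGraph V) (p : ℕ) : Prop :=
  ∀ U : Finset V, U.Nonempty → ∃ v ∈ U, (U.filter fun u => G.Adj v u).card ≤ p

/-- `G` is `c`-far (in absolute number of edges) from being `H`-free: deleting any set
of at most `c` edges from `G` leaves a graph that contains a copy of `H`. -/
def FarFromFree {A V : Type*} (H : SimpleGraph A) (G : SimpleGraph V) (c : ℝ) : Prop :=
  ∀ D : Finset (Sym2 V), (D.card : ℝ) ≤ c → ContainsCopy H (G.deleteEdges ↑D)

/-- The number of members of the collection `𝒦` whose copy contains the vertex `v`. -/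
noncomputable def collDeg {A V : Type*} (𝒦 : Finset (A → V)) (v : V) : ℕ :=
  (𝒦.filter fun φ => v ∈ Set.range φ).card

namespace SimpleGraph

variable {V : Type*} [Fintype V] (G : SimpleGraph V)

noncomputable def edgesWithin (U : Finset V) : Finset (Sym2 V) :=
  G.edgeFinset.filter fun e => ∀ v ∈ e, v ∈ U

lemma edgesWithin_univ : G.edgesWithin univ = G.edgeFinset :=
  filter_true_of_mem fun _ _ v _ => mem_univ v

lemma edgesWithin_empty : G.edgesWithin ∅ = ∅ := by
  refine filter_false_of_mem fun e _ he => ?_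
  induction e with
  | h a b => exact notMem_empty a (he a (Sym2.mem_mk_left a b))

lemma edgesWithin_subset_union_erase (U : Finset V) (v : V) :
    G.edgesWithin U ⊆
      (U.filter (G.Adj v)).image (fun u => s(v, u)) ∪ G.edgesWithin (U.erase v) := by
  intro e he
  induction e with
  | h a b =>
    simp only [edgesWithin, mem_filter, mem_edgeFinset, mem_edgeSet, Sym2.mem_iff,
      forall_eq_or_imp, forall_eq] at he
    obtain ⟨hab, haU, hbU⟩ := he
    simp only [mem_union, mem_image, mem_filter, edgesWithin, mem_edgeFinset, mem_edgeSet,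
      Sym2.mem_iff, forall_eq_or_imp, forall_eq, mem_erase]
    by_cases hva : v = a
    · exact Or.inl ⟨b, ⟨hbU, hva ▸ hab⟩, hva ▸ rfl⟩
    by_cases hvb : v = b
    · exact Or.inl ⟨a, ⟨haU, hvb ▸ hab.symm⟩, hvb ▸ Sym2.eq_swap⟩
    exact Or.inr ⟨hab, ⟨Ne.symm hva, haU⟩, Ne.symm hvb, hbU⟩

lemma card_filter_le_degree_mul_le (h : ℕ) :
    #{v | h ≤ G.degree v} * h ≤ 2 * #G.edgeFinset :=
  calc #{v | h ≤ G.degree v} * h = ∑ v ∈ {v | h ≤ G.degree v}, h := by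
        rw [sum_const, smul_eq_mul]
    _ ≤ ∑ v ∈ {v | h ≤ G.degree v}, G.degree v := sum_le_sum fun v hv => (mem_filter.1 hv).2
    _ ≤ ∑ v, G.degree v := sum_le_sum_of_subset (filter_subset _ _)
    _ = 2 * #G.edgeFinset := G.sum_degrees_eq_twice_card_edges

end SimpleGraph

namespace Degenerate

variable {V : Type*} [Fintype V] {G : SimpleGraph V} {p : ℕ}

lemma card_edgesWithin_le (hG : Degenerate G p) (U : Finset V) :
    #(G.edgesWithin U) ≤ p * #U := by
  induction U using Finset.strongInduction with
  | _ U ih =>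
    rcases U.eq_empty_or_nonempty with rfl | hU
    · simp [G.edgesWithin_empty]
    obtain ⟨v, hv, hvp⟩ := hG U hU
    calc #(G.edgesWithin U)
        ≤ #((U.filter (G.Adj v)).image (fun u => s(v, u))) + #(G.edgesWithin (U.erase v)) :=
          (card_le_card (G.edgesWithin_subset_union_erase U v)).trans (card_union_le _ _)
      _ ≤ p + p * #(U.erase v) := add_le_add (card_image_le.trans hvp) (ih _ (erase_ssubset hv))
      _ = p * #U := by
          rw [card_erase_of_mem hv]
          conv_rhs => rw [← Nat.sub_add_cancel (card_pos.2 hU)]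
          ring

lemma card_edgeFinset_le (hG : Degenerate G p) : #G.edgeFinset ≤ p * Fintype.card V := by
  simpa [G.edgesWithin_univ] using hG.card_edgesWithin_le univ

end Degenerate

/-- In a `p`-degenerate graph on `n` vertices, the number of edges both of
whose endpoints have degree at least `h` is at most `2·p²·n/h`. -/
theorem statement_3 {V : Type*} [Fintype V] [DecidableEq V]
    (p n h : ℕ) (hh : 1 ≤ h)
    (G : SimpleGraph V) (hV : Fintype.card V = n)
    (hdeg : Degenerate G p) :
    ((G.edgeFinset.filter fun e => ∀ v ∈ e, h ≤ G.degree v).card : ℝ)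
      ≤ 2 * p ^ 2 * n / h := by
  set S : Finset V := {v | h ≤ G.degree v}
  have heavy_edges :
      (G.edgeFinset.filter fun e => ∀ v ∈ e, h ≤ G.degree v) = G.edgesWithin S := by
    ext e
    simp [SimpleGraph.edgesWithin, S]
  have card_S : #S * h ≤ 2 * (p * n) := by
    rw [← hV]
    exact (G.card_filter_le_degree_mul_le h).trans (Nat.mul_le_mul_left 2 hdeg.card_edgeFinset_le)
  have card_heavy_edges : #(G.edgesWithin S) * h ≤ 2 * p ^ 2 * n :=
    calc #(G.edgesWithin S) * h ≤ p * (#S * h) := by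
          rw [← mul_assoc]; exact Nat.mul_le_mul_right h (hdeg.card_edgesWithin_le S)
      _ ≤ p * (2 * (p * n)) := Nat.mul_le_mul_left p card_S
      _ = 2 * p ^ 2 * n := by ring
  rw [heavy_edges, le_div_iff₀ (by exact_mod_cast hh)]
  exact_mod_cast card_heavy_edges
end

section
/- Let p ∈ ℕ, ε > 0, and h ≥ 4p²/ε. Let V be a finite set with |V| = n, let 𝒫 be any set of simple graphs on V, and let G be a p-degenerate simple graph on V such that every graph obtained from G by deleting at most ε·n edges does not belong to 𝒫. Let G' be the spanning subgraph of G obtained by deleting every edge both of whose endpoints have degree at least h in G. Then: (a) at most (ε/2)·n edges are deleted in passing from G to G'; (b) the set of vertices whose degree in G is at least h is an independent set in G' (i.e., G' is semi-bipartite with respect to h); and (c) every graph obtained from G' by deleting at most (ε/2)·n edges does not belong to 𝒫. -/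
open Finset SimpleGraph
open scoped Classical

lemma degen_count {V : Type*} [Fintype V] [DecidableEq V] (G : SimpleGraph V) (p : ℕ)
    (hdeg : ∀ U : Finset V, U.Nonempty → ∃ v ∈ U, (U.filter fun u => G.Adj v u).card ≤ p) :
    ∀ U : Finset V,
    (G.edgeFinset.filter fun e => ∀ w ∈ e, w ∈ U).card ≤ p * U.card := by
  intro U
  induction U using Finset.strongInduction with
  | _ U ih =>
    rcases U.eq_empty_or_nonempty with rfl | hne
    · have hf : (G.edgeFinset.filter fun e => ∀ w ∈ e, w ∈ (∅ : Finset V)) = ∅ := by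
        refine Finset.filter_eq_empty_iff.mpr ?_
        intro e he h
        induction e using Sym2.ind with
        | _ x y => exact absurd (h x (Sym2.mem_mk_left x y)) (by simp)
      rw [hf]; simp
    · obtain ⟨v, hv, hdv⟩ := hdeg U hne
      set U' := U.erase v with hU'
      have hsub : (G.edgeFinset.filter fun e => ∀ w ∈ e, w ∈ U) ⊆
          (G.edgeFinset.filter fun e => ∀ w ∈ e, w ∈ U') ∪
          (U.filter (fun u => G.Adj v u)).image (fun u => s(v, u)) := by
        intro e he
        rw [Finset.mem_filter] at he
        obtain ⟨heE, hw⟩ := he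
        induction e using Sym2.ind with
        | _ x y =>
          have hadj : G.Adj x y := (SimpleGraph.mem_edgeFinset).mp heE
          by_cases hx : x = v
          · subst hx
            refine Finset.mem_union_right _ (Finset.mem_image.mpr ⟨y, ?_, rfl⟩)
            exact Finset.mem_filter.mpr ⟨hw y (Sym2.mem_mk_right x y), hadj⟩
          · by_cases hy : y = v
            · subst hy
              refine Finset.mem_union_right _ (Finset.mem_image.mpr ⟨x, ?_, ?_⟩)
              · exact Finset.mem_filter.mpr ⟨hw x (Sym2.mem_mk_left x y), hadj.symm⟩
              · exact Sym2.eq_swap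
            · refine Finset.mem_union_left _ (Finset.mem_filter.mpr ⟨heE, ?_⟩)
              intro w hwmem
              rcases Sym2.mem_iff.mp hwmem with rfl | rfl
              · exact Finset.mem_erase.mpr ⟨hx, hw _ hwmem⟩
              · exact Finset.mem_erase.mpr ⟨hy, hw _ hwmem⟩
      have h1 := Finset.card_le_card hsub
      have h2 := Finset.card_union_le
        (G.edgeFinset.filter fun e => ∀ w ∈ e, w ∈ U')
        ((U.filter (fun u => G.Adj v u)).image (fun u => s(v, u)))
      have h3 : ((U.filter (fun u => G.Adj v u)).image (fun u => s(v, u))).card ≤ p :=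
        le_trans Finset.card_image_le hdv
      have h4 := ih U' (Finset.erase_ssubset hv)
      have h5 : U'.card + 1 = U.card := Finset.card_erase_add_one hv
      calc (G.edgeFinset.filter fun e => ∀ w ∈ e, w ∈ U).card
          ≤ p * U'.card + p := by omega
        _ = p * (U'.card + 1) := by ring
        _ = p * U.card := by rw [h5]

/-- Let `h ≥ 4p²/ε` and let `G` be a `p`-degenerate graph on `n` vertices
such that deleting any set of at most `ε·n` edges from `G` never yields a graph in `Pprop`.
Let `G'` be obtained from `G` by deleting every edge both of whose endpoints have degree at
least `h` in `G`.  Then (a) at most `(ε/2)·n` edges are deleted, (b) the heavy vertices form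
an independent set in `G'` (semi-bipartiteness), and (c) deleting any set of at most
`(ε/2)·n` edges from `G'` never yields a graph in `Pprop`. -/
theorem statement_4 {V : Type*} [Fintype V] [DecidableEq V]
    (p n h : ℕ) (ε : ℝ) (hε : 0 < ε) (hh : 4 * (p : ℝ) ^ 2 / ε ≤ (h : ℝ))
    (Pprop : Set (SimpleGraph V))
    (G : SimpleGraph V) (hV : Fintype.card V = n)
    (hdeg : Degenerate G p)
    (hfar : ∀ D : Finset (Sym2 V), (D.card : ℝ) ≤ ε * n → G.deleteEdges ↑D ∉ Pprop)
    (G' : SimpleGraph V)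
    (hG' : G' = G.deleteEdges {e : Sym2 V | ∀ v ∈ e, h ≤ G.degree v}) :
    ((G.edgeFinset.filter fun e => ∀ v ∈ e, h ≤ G.degree v).card : ℝ) ≤ ε / 2 * n ∧
    (∀ u v : V, h ≤ G.degree u → h ≤ G.degree v → ¬ G'.Adj u v) ∧
    (∀ D : Finset (Sym2 V), (D.card : ℝ) ≤ ε / 2 * n → G'.deleteEdges ↑D ∉ Pprop) := by
  set Hs : Finset V := Finset.univ.filter (fun v => h ≤ G.degree v) with hHs
  -- part (a)
  have hsubE : (G.edgeFinset.filter fun e => ∀ v ∈ e, h ≤ G.degree v) ⊆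
      G.edgeFinset.filter fun e => ∀ w ∈ e, w ∈ Hs := by
    intro e he
    rw [Finset.mem_filter] at he ⊢
    exact ⟨he.1, fun w hw => Finset.mem_filter.mpr ⟨Finset.mem_univ w, he.2 w hw⟩⟩
  have hcard1 : (G.edgeFinset.filter fun e => ∀ v ∈ e, h ≤ G.degree v).card ≤ p * Hs.card :=
    le_trans (Finset.card_le_card hsubE) (degen_count G p hdeg Hs)
  have hedges : G.edgeFinset.card ≤ p * n := by
    have h0 := degen_count G p hdeg Finset.univ
    rwa [Finset.filter_true_of_mem (fun e _ w _ => Finset.mem_univ w),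
      Finset.card_univ, hV] at h0
  have hHt : h * Hs.card ≤ 2 * (p * n) := by
    calc h * Hs.card = Hs.card • h := by rw [smul_eq_mul, Nat.mul_comm]
      _ ≤ ∑ v ∈ Hs, G.degree v := Finset.card_nsmul_le_sum Hs _ h
        (fun v hv => (Finset.mem_filter.mp hv).2)
      _ ≤ ∑ v, G.degree v := Finset.sum_le_sum_of_subset (Finset.subset_univ Hs)
      _ = 2 * G.edgeFinset.card := G.sum_degrees_eq_twice_card_edges
      _ ≤ 2 * (p * n) := Nat.mul_le_mul_left 2 hedges
  have parta : ((G.edgeFinset.filter fun e => ∀ v ∈ e, h ≤ G.degree v).card : ℝ) ≤ ε / 2 * n := by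
    rcases Nat.eq_zero_or_pos p with hp | hp
    · rw [hp, Nat.zero_mul, Nat.le_zero] at hcard1
      rw [hcard1]
      push_cast
      positivity
    · have hp0 : (0 : ℝ) < p := by exact_mod_cast hp
      have hhp : (0 : ℝ) < h := lt_of_lt_of_le (by positivity) hh
      have c1 : ((G.edgeFinset.filter fun e => ∀ v ∈ e, h ≤ G.degree v).card : ℝ) ≤
          (p : ℝ) * Hs.card := by exact_mod_cast hcard1
      have c2 : (h : ℝ) * Hs.card ≤ 2 * ((p : ℝ) * n) := by exact_mod_cast hHt
      have c3 : 4 * (p : ℝ) ^ 2 ≤ ε * h := by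
        rw [div_le_iff₀ hε] at hh; linarith [hh]
      have t0 : (0 : ℝ) ≤ Hs.card := Nat.cast_nonneg _
      nlinarith [mul_le_mul_of_nonneg_right c3 t0, mul_le_mul_of_nonneg_left c2 hε.le,
        mul_le_mul_of_nonneg_left c1 hp0.le, mul_pos hp0 hε]
  refine ⟨parta, ?_, ?_⟩
  · intro u v hu hv hadj
    rw [hG', SimpleGraph.deleteEdges_adj] at hadj
    exact hadj.2 (by
      intro w hw
      rcases Sym2.mem_iff.mp hw with rfl | rfl
      exacts [hu, hv])
  · intro D hD hmem
    set D' := (G.edgeFinset.filter fun e => ∀ v ∈ e, h ≤ G.degree v) ∪ D with hD'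
    have heq : G'.deleteEdges ↑D = G.deleteEdges ↑D' := by
      rw [hG']
      ext u v
      simp only [SimpleGraph.deleteEdges_adj, Set.mem_setOf_eq, hD', Finset.coe_union,
        Set.mem_union, Finset.mem_coe, Finset.mem_filter, SimpleGraph.mem_edgeFinset]
      tauto
    rw [heq] at hmem
    refine hfar D' ?_ hmem
    have hc : (D'.card : ℝ) ≤
        ((G.edgeFinset.filter fun e => ∀ v ∈ e, h ≤ G.degree v).card : ℝ) + D.card := by
      exact_mod_cast Finset.card_union_le _ _
    linarith
end

section
/- Let H be a graph with no isolated vertices, let G be a p-degenerate simple graph on n vertices, let h ≥ 1 and γ ∈ (0,1), and let 𝒞 be a collection of pairwise edge-disjoint copies of H in G. Then there exists a subcollection 𝒞' ⊆ 𝒞 with |𝒞'| ≥ |𝒞| − 2·γ·p·n such that every vertex v with deg_G(v) ≥ h that belongs to at least one member of 𝒞' belongs to at least γ·deg_G(v) members of 𝒞'. -/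
/-!
Repeatedly pick a vertex `v` of degree at least `h` that lies in some remaining copy but in
fewer than `γ·deg v` of them, and discard all remaining copies through `v`. Each vertex is
picked at most once, since afterwards no copy contains it, and picking `v` costs fewer than
`γ·deg v` copies. So at most `γ·∑ deg v ≤ 2γpn` copies are lost in total, the degree sum
being bounded by `2pn` because a `p`-degenerate graph has at most `pn` edges.
-/

open Finset SimpleGraph
open scoped Classical

namespace Degenerate

variable {V : Type*} {G : SimpleGraph V} {p : ℕ}

theorem sum_card_filter_adj_le (hG : Degenerate G p) (U : Finset V) :
    ∑ v ∈ U, #{u ∈ U | G.Adj v u} ≤ 2 * p * #U := by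
  induction U using Finset.strongInduction with
  | H U ih =>
    rcases U.eq_empty_or_nonempty with rfl | hU
    · simp
    obtain ⟨v, hvU, hv⟩ := hG U hU
    set U' := U.erase v
    have hU' : U = insert v U' := (insert_erase hvU).symm
    have hvU' : v ∉ U' := notMem_erase v U
    have hsplit : ∑ u ∈ U', #{w ∈ U | G.Adj u w} =
        ∑ u ∈ U', #{w ∈ U' | G.Adj u w} + #{u ∈ U' | G.Adj u v} := by
      rw [card_filter, ← sum_add_distrib]
      refine sum_congr rfl fun u _ => ?_
      rw [hU', filter_insert]
      split_ifs
      · rw [card_insert_of_notMem (by simp [hvU'])]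
      · simp
    have hback : #{u ∈ U' | G.Adj u v} ≤ p :=
      (card_le_card fun u hu => by
        simp only [mem_filter] at hu ⊢
        exact ⟨mem_of_mem_erase hu.1, hu.2.symm⟩).trans hv
    have hIH := ih U' (erase_ssubset hvU)
    have hcard : #U = #U' + 1 := by rw [hU', card_insert_of_notMem hvU']
    calc ∑ u ∈ U, #{w ∈ U | G.Adj u w}
        = #{w ∈ U | G.Adj v w} + ∑ u ∈ U', #{w ∈ U | G.Adj u w} := by
          rw [← add_sum_erase U _ hvU]
      _ ≤ 2 * p * #U := by rw [hsplit, hcard]; nlinarith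

theorem sum_degree_le [Fintype V] (hG : Degenerate G p) :
    ∑ v, G.degree v ≤ 2 * p * Fintype.card V := by
  simpa [degree, neighborFinset_eq_filter] using hG.sum_card_filter_adj_le univ

end Degenerate

section Pruning

variable {A V : Type*}

/-- Each discarded batch of copies is charged to its bad vertex, which is then removed from `U`:
this is why a vertex is charged at most once. -/
theorem exists_subset_threshold_le_collDeg (P : V → Prop) (t : V → ℝ) (ht : ∀ v, 0 ≤ t v)
    (𝒞 : Finset (A → V)) (U : Finset V) (hU : ∀ f ∈ 𝒞, ∀ a, f a ∈ U) :
    ∃ 𝒞' ⊆ 𝒞, (#𝒞 : ℝ) ≤ #𝒞' + ∑ v ∈ U, t v ∧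
      ∀ v, P v → (∃ f ∈ 𝒞', v ∈ Set.range f) → t v ≤ collDeg 𝒞' v := by
  induction 𝒞 using Finset.strongInduction generalizing U with
  | H 𝒞 ih =>
    by_cases hbad : ∃ v, P v ∧ (∃ f ∈ 𝒞, v ∈ Set.range f) ∧ (collDeg 𝒞 v : ℝ) < t v
    swap
    · push Not at hbad
      exact ⟨𝒞, Subset.refl _, le_add_of_nonneg_right (sum_nonneg fun v _ => ht v), hbad⟩
    obtain ⟨v, -, ⟨f₀, hf₀, hvf₀⟩, hlt⟩ := hbad
    set B := 𝒞.filter fun f => v ∈ Set.range f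
    have hB : B ⊆ 𝒞 := filter_subset _ _
    have hvU : v ∈ U := by
      obtain ⟨a₀, rfl⟩ := hvf₀
      exact hU f₀ hf₀ a₀
    have hrest : 𝒞 \ B ⊂ 𝒞 := sdiff_ssubset hB ⟨f₀, mem_filter.mpr ⟨hf₀, hvf₀⟩⟩
    have hU' : ∀ f ∈ 𝒞 \ B, ∀ a, f a ∈ U.erase v := by
      intro f hf a
      obtain ⟨hf𝒞, hfB⟩ := mem_sdiff.mp hf
      exact mem_erase.mpr ⟨fun ha => hfB (mem_filter.mpr ⟨hf𝒞, a, ha⟩), hU f hf𝒞 a⟩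
    obtain ⟨𝒞', h𝒞', hcard, hgood⟩ := ih (𝒞 \ B) hrest (U.erase v) hU'
    refine ⟨𝒞', h𝒞'.trans sdiff_subset, ?_, hgood⟩
    have hsplit : (#𝒞 : ℝ) = #B + #(𝒞 \ B) := by
      rw [card_sdiff_of_subset hB]; push_cast [card_le_card hB]; ring
    have hBt : (#B : ℝ) < t v := hlt
    rw [← add_sum_erase U t hvU]
    linarith

end Pruning

theorem statement_7_general {A V : Type*} [Fintype A] [Fintype V] [DecidableEq V]
    (p n h : ℕ) (γ : ℝ) (hγ0 : 0 < γ)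
    (G : SimpleGraph V) (hV : Fintype.card V = n)
    (hdeg : Degenerate G p)
    (𝒞 : Finset (A → V)) :
    ∃ 𝒞' ⊆ 𝒞, (𝒞.card : ℝ) - 2 * γ * p * n ≤ (𝒞'.card : ℝ) ∧
      ∀ v : V, h ≤ G.degree v → (∃ f ∈ 𝒞', v ∈ Set.range f) →
        γ * G.degree v ≤ ((𝒞'.filter fun f => v ∈ Set.range f).card : ℝ) := by
  obtain ⟨𝒞', h𝒞', hcard, hgood⟩ := exists_subset_threshold_le_collDeg
    (fun v => h ≤ G.degree v) (fun v => γ * G.degree v) (fun v => by positivity) 𝒞 univ (by simp)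
  refine ⟨𝒞', h𝒞', ?_, fun v hv hv𝒞' => (hgood v hv hv𝒞').trans_eq (by unfold collDeg; congr)⟩
  have hsum : (∑ v, G.degree v : ℝ) ≤ 2 * p * n := by
    exact_mod_cast hV ▸ hdeg.sum_degree_le
  rw [← mul_sum] at hcard
  have := mul_le_mul_of_nonneg_left hsum hγ0.le
  linarith

/-- Given a collection `𝒞` of pairwise edge-disjoint copies of `H` (a
graph without isolated vertices) in a `p`-degenerate graph `G` on `n` vertices, one can
prune `𝒞` to a subcollection `𝒞'` of size at least `|𝒞| − 2·γ·p·n` in which every vertex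
of degree at least `h` that appears in some member appears in at least `γ·deg(v)` members. -/
theorem statement_7 {A V : Type*} [Fintype A] [Fintype V] [DecidableEq V]
    (p n h : ℕ) (hh : 1 ≤ h) (γ : ℝ) (hγ0 : 0 < γ) (hγ1 : γ < 1)
    (H : SimpleGraph A) (hnoiso : ∀ a : A, ∃ b : A, H.Adj a b)
    (G : SimpleGraph V) (hV : Fintype.card V = n)
    (hdeg : Degenerate G p)
    (𝒞 : Finset (A → V)) (h𝒞 : EdgeDisjointCopies H G 𝒞) :
    ∃ 𝒞' ⊆ 𝒞, (𝒞.card : ℝ) - 2 * γ * p * n ≤ (𝒞'.card : ℝ) ∧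
      ∀ v : V, h ≤ G.degree v → (∃ f ∈ 𝒞', v ∈ Set.range f) →
        γ * G.degree v ≤ ((𝒞'.filter fun f => v ∈ Set.range f).card : ℝ) :=
  statement_7_general p n h γ hγ0 G hV hdeg 𝒞
end

section
/- Let H₁ be a graph on k vertices and let S ⊆ V(H₁) with |S| = r ≥ 1. Let G be a simple graph on n vertices, let W ⊆ V(G) be any designated set of vertices (e.g., the vertices of degree at least h), and let 𝒦 be a finite collection of pairs (K, φ), where K is a subgraph of G isomorphic to H₁ and φ : V(H₁) → V(K) is an isomorphism, such that for every (K, φ) ∈ 𝒦 and every v ∈ V(K) ∩ W, the role φ⁻¹(v) belongs to S. Then there exist a function ρ : W → S and a subcollection 𝒦' ⊆ 𝒦 with |𝒦'| ≥ |𝒦| / r^r such that for every (K, φ) ∈ 𝒦' and every v ∈ V(K) ∩ W, φ⁻¹(v) = ρ(v). In particular, if |𝒦| ≥ ε·n/(2·k·p), then |𝒦'| ≥ ε·n/(2·k·p·r^r). -/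
open Finset SimpleGraph
open scoped Classical

private lemma key_count {A V : Type*} [Fintype A] [Fintype V] [DecidableEq V]
    [Nonempty A]
    (S : Finset A) (hS1 : 1 ≤ S.card) (Wset : Finset V) (φ : A → V)
    (hinj : Function.Injective φ) (hrole : ∀ a, φ a ∈ Wset → a ∈ S) :
    (Finset.univ.filter fun ρ : V → A => ∀ v ∈ Wset, ρ v ∈ S).card ≤
      S.card ^ S.card *
      ((Finset.univ.filter fun ρ : V → A => ∀ v ∈ Wset, ρ v ∈ S).filter
        fun ρ => ∀ a, φ a ∈ Wset → a = ρ (φ a)).card := by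
  classical
  set T : Finset (V → A) := Finset.univ.filter fun ρ : V → A => ∀ v ∈ Wset, ρ v ∈ S with hT
  set Wφ : Finset V := Wset.filter (fun v => ∃ a, φ a = v) with hWφ
  set pre : V → A := Function.invFun φ with hpredef
  have hpre : ∀ v ∈ Wφ, φ (pre v) = v := by
    intro v hv
    exact Function.invFun_eq (Finset.mem_filter.mp hv).2
  have hpreS : ∀ v ∈ Wφ, pre v ∈ S := by
    intro v hv
    exact hrole _ (by rw [hpre v hv]; exact (Finset.mem_filter.mp hv).1)
  have hWcard : Wφ.card ≤ S.card := by
    apply Finset.card_le_card_of_injOn pre hpreS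
    intro v₁ h₁ v₂ h₂ h
    rw [← hpre v₁ h₁, ← hpre v₂ h₂, h]
  set md : (V → A) → (V → A) := fun ρ v => if v ∈ Wφ then pre v else ρ v with hmd
  have hmdT : ∀ ρ ∈ T, md ρ ∈ T.filter fun σ => ∀ a, φ a ∈ Wset → a = σ (φ a) := by
    intro ρ hρ
    have hρ' := (Finset.mem_filter.mp hρ).2
    refine Finset.mem_filter.mpr ⟨Finset.mem_filter.mpr ⟨Finset.mem_univ _, ?_⟩, ?_⟩
    · intro v hv
      by_cases h : v ∈ Wφ
      · simpa [hmd, h] using hpreS v h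
      · simpa [hmd, h] using hρ' v hv
    · intro a ha
      have hmem : φ a ∈ Wφ := Finset.mem_filter.mpr ⟨ha, ⟨a, rfl⟩⟩
      have : φ (pre (φ a)) = φ a := hpre _ hmem
      have := hinj this
      simp [hmd, hmem, this]
  have himg : T.image md ⊆ T.filter fun σ => ∀ a, φ a ∈ Wset → a = σ (φ a) := by
    intro b hb
    obtain ⟨ρ, hρ, rfl⟩ := Finset.mem_image.mp hb
    exact hmdT ρ hρ
  have hfiber : ∀ b ∈ T.image md, (T.filter fun ρ => md ρ = b).card ≤ S.card ^ S.card := by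
    intro b _
    have h1 : (T.filter fun ρ => md ρ = b).card ≤ (Wφ.pi fun _ => S).card := by
      apply Finset.card_le_card_of_injOn (fun ρ => fun v hv => ρ v)
      · intro ρ hρ
        have hρT := Finset.mem_filter.mp (Finset.mem_filter.mp hρ).1
        refine Finset.mem_pi.mpr ?_
        intro v hv
        exact hρT.2 v (Finset.mem_filter.mp hv).1
      · intro ρ₁ h₁ ρ₂ h₂ h
        have hb₁ : md ρ₁ = b := (Finset.mem_filter.mp h₁).2
        have hb₂ : md ρ₂ = b := (Finset.mem_filter.mp h₂).2
        funext v
        by_cases hv : v ∈ Wφ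
        · exact congrFun (congrFun h v) hv
        · have e₁ : ρ₁ v = b v := by rw [← hb₁]; simp [hmd, hv]
          have e₂ : ρ₂ v = b v := by rw [← hb₂]; simp [hmd, hv]
          rw [e₁, e₂]
    have h2 : (Wφ.pi fun _ => S).card = S.card ^ Wφ.card := by
      rw [Finset.card_pi, Finset.prod_const]
    calc (T.filter fun ρ => md ρ = b).card ≤ S.card ^ Wφ.card := by rw [← h2]; exact h1
      _ ≤ S.card ^ S.card := Nat.pow_le_pow_right hS1 hWcard
  calc T.card ≤ S.card ^ S.card * (T.image md).card :=
        Finset.card_le_mul_card_image T _ hfiber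
    _ ≤ S.card ^ S.card * (T.filter fun σ => ∀ a, φ a ∈ Wset → a = σ (φ a)).card :=
        Nat.mul_le_mul_left _ (Finset.card_le_card himg)

/-- Let `𝒦` be a collection of copies `φ` of `H₁` (a graph on `k`
vertices) in `G` such that every vertex of a copy lying in the designated set `Wset` plays a
role in `S` (where `|S| = r`).  Then there is a global role map `ρ : Wset → S` and a
subcollection `𝒦' ⊆ 𝒦` of size at least `|𝒦|/r^r` that is role-preserving: every vertex
of a copy in `𝒦'` lying in `Wset` plays the role `ρ(v)`.  In particular, if
`|𝒦| ≥ ε·n/(2·k·p)` then `|𝒦'| ≥ ε·n/(2·k·p·r^r)`. -/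
theorem statement_9 {A V : Type*} [Fintype A] [Fintype V] [DecidableEq V]
    (p k r n : ℕ) (hr : 1 ≤ r) (ε : ℝ)
    (H₁ : SimpleGraph A) (hA : Fintype.card A = k)
    (S : Finset A) (hS : S.card = r)
    (G : SimpleGraph V) (hV : Fintype.card V = n)
    (Wset : Finset V)
    (𝒦 : Finset (A → V))
    (h𝒦 : ∀ φ ∈ 𝒦, IsCopy H₁ G φ ∧ ∀ a : A, φ a ∈ Wset → a ∈ S) :
    ∃ (ρ : V → A) (𝒦' : Finset (A → V)), 𝒦' ⊆ 𝒦 ∧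
      (∀ v ∈ Wset, ρ v ∈ S) ∧
      (𝒦.card : ℝ) / (r : ℝ) ^ r ≤ (𝒦'.card : ℝ) ∧
      (∀ φ ∈ 𝒦', ∀ a : A, φ a ∈ Wset → a = ρ (φ a)) ∧
      (ε * n / (2 * k * p) ≤ (𝒦.card : ℝ) →
        ε * n / (2 * k * p * (r : ℝ) ^ r) ≤ (𝒦'.card : ℝ)) := by
  classical
  have hS1 : 1 ≤ S.card := by rw [hS]; exact hr
  obtain ⟨a₀, ha₀⟩ : S.Nonempty := Finset.card_pos.mp hS1
  haveI : Nonempty A := ⟨a₀⟩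
  set T : Finset (V → A) := Finset.univ.filter fun ρ : V → A => ∀ v ∈ Wset, ρ v ∈ S with hT
  have hTne : ((fun _ => a₀ : V → A)) ∈ T :=
    Finset.mem_filter.mpr ⟨Finset.mem_univ _, fun _ _ => ha₀⟩
  have hTpos : 0 < T.card := Finset.card_pos.mpr ⟨_, hTne⟩
  have hkey : ∀ φ ∈ 𝒦, T.card ≤
      S.card ^ S.card * (T.filter fun ρ => ∀ a, φ a ∈ Wset → a = ρ (φ a)).card := by
    intro φ hφ
    exact key_count S hS1 Wset φ (h𝒦 φ hφ).1.1 (h𝒦 φ hφ).2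
  have hswap : (∑ φ ∈ 𝒦, (T.filter fun ρ => ∀ a, φ a ∈ Wset → a = ρ (φ a)).card)
      = ∑ ρ ∈ T, (𝒦.filter fun φ => ∀ a, φ a ∈ Wset → a = ρ (φ a)).card := by
    simp_rw [Finset.card_filter]
    exact Finset.sum_comm
  have hsum : 𝒦.card * T.card ≤
      S.card ^ S.card * ∑ ρ ∈ T, (𝒦.filter fun φ => ∀ a, φ a ∈ Wset → a = ρ (φ a)).card := by
    calc 𝒦.card * T.card = ∑ _φ ∈ 𝒦, T.card := by rw [Finset.sum_const, smul_eq_mul]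
      _ ≤ ∑ φ ∈ 𝒦, S.card ^ S.card * (T.filter fun ρ => ∀ a, φ a ∈ Wset → a = ρ (φ a)).card :=
          Finset.sum_le_sum hkey
      _ = S.card ^ S.card * ∑ φ ∈ 𝒦, (T.filter fun ρ => ∀ a, φ a ∈ Wset → a = ρ (φ a)).card := by
          rw [Finset.mul_sum]
      _ = _ := by rw [hswap]
  have hTne' : T.Nonempty := ⟨_, hTne⟩
  have hex := Finset.exists_max_image T
    (fun σ : V → A => (𝒦.filter fun φ => ∀ a, φ a ∈ Wset → a = σ (φ a)).card) hTne'
  obtain ⟨ρ, hρT, hmax⟩ := hex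
  set 𝒦' : Finset (A → V) := 𝒦.filter fun φ => ∀ a, φ a ∈ Wset → a = ρ (φ a) with h𝒦'
  have hsum2 : (∑ σ ∈ T, (𝒦.filter fun φ => ∀ a, φ a ∈ Wset → a = σ (φ a)).card)
      ≤ T.card * 𝒦'.card := by
    calc _ ≤ ∑ _σ ∈ T, 𝒦'.card := Finset.sum_le_sum fun σ hσ => hmax σ hσ
      _ = T.card * 𝒦'.card := by rw [Finset.sum_const, smul_eq_mul]
  have hmain : 𝒦.card ≤ S.card ^ S.card * 𝒦'.card := by
    have h := le_trans hsum (Nat.mul_le_mul_left _ hsum2)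
    have h' : 𝒦.card * T.card ≤ (S.card ^ S.card * 𝒦'.card) * T.card := by
      calc 𝒦.card * T.card ≤ S.card ^ S.card * (T.card * 𝒦'.card) := h
        _ = (S.card ^ S.card * 𝒦'.card) * T.card := by ring
    exact Nat.le_of_mul_le_mul_right h' hTpos
  have hrpos : (0:ℝ) < (r:ℝ) ^ r := pow_pos (by exact_mod_cast hr) r
  have hmainR : (𝒦.card : ℝ) / (r : ℝ) ^ r ≤ (𝒦'.card : ℝ) := by
    rw [div_le_iff₀ hrpos]
    have : (𝒦.card : ℝ) ≤ (r:ℝ) ^ r * (𝒦'.card : ℝ) := by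
      have := hmain
      rw [hS] at this
      exact_mod_cast this
    linarith
  refine ⟨ρ, 𝒦', Finset.filter_subset _ _, fun v hv => (Finset.mem_filter.mp hρT).2 v hv,
    hmainR, fun φ hφ => (Finset.mem_filter.mp hφ).2, ?_⟩
  intro hbig
  have : ε * n / (2 * k * p * (r:ℝ) ^ r) = (ε * n / (2 * k * p)) / (r:ℝ) ^ r := by
    rw [div_div]
  rw [this]
  calc (ε * n / (2 * k * p)) / (r:ℝ) ^ r ≤ (𝒦.card : ℝ) / (r:ℝ) ^ r := by
        exact div_le_div_of_nonneg_right hbig hrpos.le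
    _ ≤ (𝒦'.card : ℝ) := hmainR
end

section
/- For every integer m ≥ 1 there exists a simple graph F on exactly 2m + 2m² vertices such that: (a) F is 2-degenerate; (b) F contains m² pairwise edge-disjoint cycles of length 4; and consequently (c) at least m² edges must be deleted from F in order to obtain a graph containing no cycle of length 4. -/
open Finset SimpleGraph
open scoped Classical

/-!
`F` is the subdivision of `K_{m,m}` with every edge doubled. Every edge of a subdivision has a
subdivision vertex, of degree at most 2, as an end, so `F` is 2-degenerate. The two subdivided
copies of an edge `ij` form a 4-cycle; these `m²` cycles are edge-disjoint since they share no
subdivision vertex, and a set of fewer than `m²` edges misses one of them entirely.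
-/

section Copies

variable {A V W : Type*} {H : SimpleGraph A} {G : SimpleGraph V}

lemma IsCopy.comp_embedding {G' : SimpleGraph W} (φ : G ↪g G') {f : A → V}
    (hf : IsCopy H G f) : IsCopy H G' (φ ∘ f) :=
  ⟨φ.injective.comp hf.1, fun a b hab => φ.map_adj_iff.2 (hf.2 a b hab)⟩

variable [Fintype A] [DecidableEq V]

lemma mem_copyEdges_of_adj (f : A → V) {a b : A} (hab : H.Adj a b) :
    s(f a, f b) ∈ copyEdges H f :=
  mem_image.2 ⟨s(a, b), by simpa using hab, rfl⟩

lemma mem_range_of_mem_copyEdges {f : A → V} {s : Sym2 V} (hs : s ∈ copyEdges H f) {x : V}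
    (hx : x ∈ s) : x ∈ Set.range f := by
  obtain ⟨z, -, rfl⟩ := mem_image.1 hs
  obtain ⟨a, -, rfl⟩ := Sym2.mem_map.1 hx
  exact ⟨a, rfl⟩

lemma IsCopy.mem_edgeSet_of_mem_copyEdges {f : A → V} (hf : IsCopy H G f) {s : Sym2 V}
    (hs : s ∈ copyEdges H f) : s ∈ G.edgeSet := by
  obtain ⟨z, hz, rfl⟩ := mem_image.1 hs
  induction z using Sym2.ind with
  | _ a b => exact hf.2 a b (by simpa using hz)

lemma IsCopy.deleteEdges {f : A → V} (hf : IsCopy H G f) {D : Finset (Sym2 V)}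
    (hD : Disjoint (copyEdges H f) D) : IsCopy H (G.deleteEdges ↑D) f :=
  ⟨hf.1, fun a b hab => (G.deleteEdges_adj ..).2
    ⟨hf.2 a b hab, fun hmem => disjoint_left.1 hD (mem_copyEdges_of_adj f hab) hmem⟩⟩

lemma copyEdges_comp [DecidableEq W] (φ : V → W) (f : A → V) :
    copyEdges H (φ ∘ f) = (copyEdges H f).image (Sym2.map φ) := by
  simp only [copyEdges, image_image, Sym2.map_comp]

/-- Each edge of `D` meets at most one copy of an edge-disjoint family, so a family larger than
`D` has a member avoiding `D`. -/
lemma EdgeDisjointCopies.exists_disjoint_of_card_lt {𝒞 : Finset (A → V)}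
    (h𝒞 : EdgeDisjointCopies H G 𝒞) {D : Finset (Sym2 V)} (hD : D.card < 𝒞.card) :
    ∃ f ∈ 𝒞, Disjoint (copyEdges H f) D := by
  by_contra! hmeet
  refine hD.not_ge (card_le_card_of_forall_subsingleton (fun f s => s ∈ copyEdges H f)
    (fun f hf => ?_) fun s _ f hf g hg => ?_)
  · obtain ⟨s, hsf, hsD⟩ := not_disjoint_iff.1 (hmeet f hf)
    exact ⟨s, hsD, hsf⟩
  · by_contra hfg
    exact disjoint_left.1 (h𝒞.2 f hf.1 g hg.1 hfg) hf.2 hg.2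

lemma EdgeDisjointCopies.containsCopy_deleteEdges {𝒞 : Finset (A → V)}
    (h𝒞 : EdgeDisjointCopies H G 𝒞) {D : Finset (Sym2 V)} (hD : D.card < 𝒞.card) :
    ContainsCopy H (G.deleteEdges ↑D) := by
  obtain ⟨f, hf, hfD⟩ := h𝒞.exists_disjoint_of_card_lt hD
  exact ⟨f, (h𝒞.1 f hf).deleteEdges hfD⟩

lemma EdgeDisjointCopies.map_embedding [DecidableEq W] {G' : SimpleGraph W} (φ : G ↪g G')
    {𝒞 : Finset (A → V)} (h𝒞 : EdgeDisjointCopies H G 𝒞) :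
    EdgeDisjointCopies H G' (𝒞.map ⟨(φ ∘ ·), φ.injective.comp_left⟩) := by
  refine ⟨?_, ?_⟩
  · simp only [mem_map, Function.Embedding.coeFn_mk, forall_exists_index, and_imp]
    rintro _ f hf rfl
    exact (h𝒞.1 f hf).comp_embedding φ
  · simp only [mem_map, Function.Embedding.coeFn_mk, forall_exists_index, and_imp]
    rintro _ f hf rfl _ g hg rfl hfg
    rw [copyEdges_comp, copyEdges_comp]
    exact disjoint_image (Sym2.map.injective φ.injective) |>.2
      (h𝒞.2 f hf g hg fun h => hfg (h ▸ rfl))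

end Copies

section Degeneracy

variable {V W : Type*} {G : SimpleGraph V} {p : ℕ}

lemma Degenerate.of_embedding {G' : SimpleGraph W} (φ : G ↪g G') (h : Degenerate G' p) :
    Degenerate G p := by
  intro U hU
  obtain ⟨_, hw, hwp⟩ := h (U.map φ.toEmbedding) (hU.map)
  obtain ⟨v, hv, rfl⟩ := mem_map.1 hw
  refine ⟨v, hv, le_trans ?_ hwp⟩
  rw [← card_map φ.toEmbedding]
  refine card_le_card fun w hw => ?_
  obtain ⟨u, hu, rfl⟩ := mem_map.1 hw
  simp only [mem_filter] at hu ⊢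
  exact ⟨mem_map_of_mem _ hu.1, φ.map_adj_iff.2 hu.2⟩

/-- If `U` misses the cover it is independent; otherwise a cover vertex in `U` will do. -/
lemma degenerate_of_isVertexCover [Fintype V] {L : Set V} (hL : G.IsVertexCover L)
    (hdeg : ∀ v ∈ L, G.degree v ≤ p) : Degenerate G p := by
  intro U hU
  by_cases hUL : ∃ v ∈ U, v ∈ L
  · obtain ⟨v, hvU, hvL⟩ := hUL
    refine ⟨v, hvU, le_trans ?_ (hdeg v hvL)⟩
    rw [← card_neighborFinset_eq_degree]
    exact card_le_card fun u hu => by simpa using (mem_filter.1 hu).2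
  · push Not at hUL
    obtain ⟨v, hv⟩ := hU
    refine ⟨v, hv, ?_⟩
    rw [filter_false_of_mem fun u hu hvu => (hL hvu).elim (hUL v hv) (hUL u hu)]
    simp

end Degeneracy

section Subdivision

variable {α ι : Type*} (ends : ι → Sym2 α)

/-- The subdivision of the multigraph on `α` whose edges are indexed by `ι` and join the ends
`ends l`: every edge `l` becomes a new vertex `inr l` adjacent to its ends. -/
def subdivision : SimpleGraph (α ⊕ ι) where
  Adj
    | .inl a, .inr l => a ∈ ends l
    | .inr l, .inl a => a ∈ ends l
    | _, _ => False
  symm := ⟨by rintro (a | l) (b | k) h <;> exact h⟩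
  loopless := ⟨by rintro (a | l) h <;> exact h⟩

variable {ends}

@[simp]
lemma subdivision_adj_inl_inr {a : α} {l : ι} :
    (subdivision ends).Adj (.inl a) (.inr l) ↔ a ∈ ends l := Iff.rfl

@[simp]
lemma subdivision_adj_inr_inl {a : α} {l : ι} :
    (subdivision ends).Adj (.inr l) (.inl a) ↔ a ∈ ends l := Iff.rfl

@[simp]
lemma subdivision_not_adj_inl_inl {a b : α} : ¬(subdivision ends).Adj (.inl a) (.inl b) := id

@[simp]
lemma subdivision_not_adj_inr_inr {l k : ι} : ¬(subdivision ends).Adj (.inr l) (.inr k) := id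

lemma isVertexCover_range_inr_subdivision :
    (subdivision ends).IsVertexCover (Set.range Sum.inr) := by
  rintro (a | l) (b | k) h
  · exact (subdivision_not_adj_inl_inl h).elim
  all_goals simp

lemma degree_inr_subdivision_le_two [Fintype α] [Fintype ι] (l : ι) :
    (subdivision ends).degree (.inr l) ≤ 2 := by
  induction hl : ends l using Sym2.ind with
  | _ a b =>
    rw [← card_neighborFinset_eq_degree]
    refine (card_le_card fun x hx => ?_).trans (card_le_two (a := Sum.inl a) (b := Sum.inl b))
    rcases x with c | k
    · simpa [hl] using hx
    · simp at hx

lemma degenerate_subdivision [Fintype α] [Fintype ι] : Degenerate (subdivision ends) 2 :=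
  degenerate_of_isVertexCover isVertexCover_range_inr_subdivision <| by
    rintro _ ⟨l, rfl⟩
    exact degree_inr_subdivision_le_two l

lemma isCopy_cycleGraph_four_subdivision {a b : α} (hab : a ≠ b) {l₁ l₂ : ι} (hl : l₁ ≠ l₂)
    (ha₁ : a ∈ ends l₁) (hb₁ : b ∈ ends l₁) (ha₂ : a ∈ ends l₂) (hb₂ : b ∈ ends l₂) :
    IsCopy (cycleGraph 4) (subdivision ends) ![.inl a, .inr l₁, .inl b, .inr l₂] := by
  refine ⟨fun x y hxy => ?_, fun x y hxy => ?_⟩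
  · fin_cases x <;> fin_cases y <;> simp_all [eq_comm]
  · fin_cases x <;> fin_cases y <;> simp_all [cycleGraph_adj] <;> exact absurd hxy (by decide)

/-- Every edge of a subdivision contains a subdivision vertex, so copies sharing none are
edge-disjoint. -/
lemma disjoint_copyEdges_subdivision {A : Type*} [Fintype A] [DecidableEq α] [DecidableEq ι]
    {H : SimpleGraph A} {f g : A → α ⊕ ι} (hf : IsCopy H (subdivision ends) f)
    (hfg : ∀ l, .inr l ∈ Set.range f → .inr l ∉ Set.range g) :
    Disjoint (copyEdges H f) (copyEdges H g) := by
  refine disjoint_left.2 fun s hsf hsg => ?_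
  obtain ⟨l, hl⟩ : ∃ l, Sum.inr l ∈ s := by
    have hs := hf.mem_edgeSet_of_mem_copyEdges hsf
    induction s using Sym2.ind with
    | _ x y =>
      obtain ⟨l, hl⟩ | ⟨l, hl⟩ := isVertexCover_range_inr_subdivision hs
      · exact ⟨l, hl ▸ Sym2.mem_mk_left _ _⟩
      · exact ⟨l, hl ▸ Sym2.mem_mk_right _ _⟩
  exact hfg l (mem_range_of_mem_copyEdges hsf hl) (mem_range_of_mem_copyEdges hsg hl)

end Subdivision

section DoubledBiclique

variable (m : ℕ)

/-- `K_{m,m}` on the hubs `A = inl`, `C = inr` with every edge doubled; subdividing the copies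
`0` and `1` of the edge `(i, j)` gives its leaves in `L₁` and `L₂`. -/
def doubledBicliqueEnds (l : Fin 2 × (Fin m × Fin m)) : Sym2 (Fin m ⊕ Fin m) :=
  s(.inl l.2.1, .inr l.2.2)

abbrev DoubledBicliqueVertex := (Fin m ⊕ Fin m) ⊕ Fin 2 × (Fin m × Fin m)

def fourCycle (p : Fin m × Fin m) : Fin 4 → DoubledBicliqueVertex m :=
  ![.inl (.inl p.1), .inr (0, p), .inl (.inr p.2), .inr (1, p)]

variable {m}

lemma isCopy_fourCycle (p : Fin m × Fin m) :
    IsCopy (cycleGraph 4) (subdivision (doubledBicliqueEnds m)) (fourCycle m p) :=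
  isCopy_cycleGraph_four_subdivision Sum.inl_ne_inr (by simp) (by simp [doubledBicliqueEnds])
    (by simp [doubledBicliqueEnds]) (by simp [doubledBicliqueEnds]) (by simp [doubledBicliqueEnds])

lemma eq_of_inr_mem_range_fourCycle {p : Fin m × Fin m} {l : Fin 2 × (Fin m × Fin m)}
    (hl : .inr l ∈ Set.range (fourCycle m p)) : l.2 = p := by
  obtain ⟨x, hx⟩ := hl
  fin_cases x <;> simp [fourCycle] at hx <;> simp [← hx]

lemma fourCycle_injective : Function.Injective (fourCycle m) := fun _ _ h =>
  (eq_of_inr_mem_range_fourCycle ⟨1, congrFun h 1⟩).symm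

def fourCycles (m : ℕ) : Finset (Fin 4 → DoubledBicliqueVertex m) :=
  univ.map ⟨fourCycle m, fourCycle_injective⟩

lemma card_fourCycles : (fourCycles m).card = m ^ 2 := by
  simp [fourCycles, sq]

lemma edgeDisjointCopies_fourCycles :
    EdgeDisjointCopies (cycleGraph 4) (subdivision (doubledBicliqueEnds m)) (fourCycles m) := by
  simp only [EdgeDisjointCopies, fourCycles, mem_map, mem_univ, true_and,
    Function.Embedding.coeFn_mk, forall_exists_index, forall_apply_eq_imp_iff]
  refine ⟨isCopy_fourCycle, fun p _ hpq => disjoint_copyEdges_subdivision (isCopy_fourCycle p)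
    fun _ hp hq => ?_⟩
  exact hpq (by rw [← eq_of_inr_mem_range_fourCycle hp, eq_of_inr_mem_range_fourCycle hq])

end DoubledBiclique

theorem statement_12_general (m : ℕ) :
    ∃ F : SimpleGraph (Fin (2 * m + 2 * m ^ 2)),
      Degenerate F 2 ∧
      (∃ 𝒞 : Finset (Fin 4 → Fin (2 * m + 2 * m ^ 2)),
        EdgeDisjointCopies (SimpleGraph.cycleGraph 4) F 𝒞 ∧ m ^ 2 ≤ 𝒞.card) ∧
      (∀ D : Finset (Sym2 (Fin (2 * m + 2 * m ^ 2))), D.card < m ^ 2 →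
        ContainsCopy (SimpleGraph.cycleGraph 4) (F.deleteEdges ↑D)) := by
  let G := subdivision (doubledBicliqueEnds m)
  let e : DoubledBicliqueVertex m ≃ Fin (2 * m + 2 * m ^ 2) := Fintype.equivFinOfCardEq <| by
    simp only [Fintype.card_sum, Fintype.card_prod, Fintype.card_fin]
    ring
  let φ : G ≃g G.map e.toEmbedding := Iso.map e G
  have hcycles := edgeDisjointCopies_fourCycles.map_embedding φ.toEmbedding
  refine ⟨G.map e.toEmbedding, degenerate_subdivision.of_embedding φ.symm.toEmbedding,
    ⟨_, hcycles, by simp [card_fourCycles]⟩, fun D hD => hcycles.containsCopy_deleteEdges ?_⟩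
  simpa [card_fourCycles] using hD

/-- For every `m ≥ 1` there is a simple graph `F` on exactly `2m + 2m²`
vertices that is `2`-degenerate, contains `m²` pairwise edge-disjoint `4`-cycles, and from
which at least `m²` edges must be deleted to destroy all `4`-cycles. -/
theorem statement_12 (m : ℕ) (hm : 1 ≤ m) :
    ∃ F : SimpleGraph (Fin (2 * m + 2 * m ^ 2)),
      Degenerate F 2 ∧
      (∃ 𝒞 : Finset (Fin 4 → Fin (2 * m + 2 * m ^ 2)),
        EdgeDisjointCopies (SimpleGraph.cycleGraph 4) F 𝒞 ∧ m ^ 2 ≤ 𝒞.card) ∧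
      (∀ D : Finset (Sym2 (Fin (2 * m + 2 * m ^ 2))), D.card < m ^ 2 →
        ContainsCopy (SimpleGraph.cycleGraph 4) (F.deleteEdges ↑D)) :=
  statement_12_general m
end

section
/- Let H be a connected graph on k ≥ 2 vertices such that for every independent set S ⊆ V(H), the subgraph of H induced on V(H) \ S is connected. Let h ≥ 1, ε > 0, and let G be a simple graph on n vertices that is ε-far from being H-free and semi-bipartite with respect to h (the set of vertices of degree at least h is independent in G). For a vertex v of G, let B(v) denote the set of vertices u for which there exists a walk v = x₀, x₁, …, x_j = u in G with j ≤ k such that every vertex x₀, …, x_{j−1} has degree less than h in G. Then there are more than ε·n/h vertices v with deg_G(v) < h such that the subgraph of G induced on B(v) contains a copy of H. -/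
open Finset SimpleGraph
open scoped Classical

namespace SimpleGraph

variable {V : Type*}

def IsSemiBipartite [Fintype V] (G : SimpleGraph V) (h : ℕ) : Prop :=
  ∀ u v : V, h ≤ G.degree u → h ≤ G.degree v → ¬ G.Adj u v

def lightBall [Fintype V] (G : SimpleGraph V) (h k : ℕ) (v : V) : Set V :=
  {u | ∃ (j : ℕ) (x : ℕ → V), j ≤ k ∧ x 0 = v ∧ x j = u ∧
    (∀ i < j, G.Adj (x i) (x (i + 1))) ∧ (∀ i < j, G.degree (x i) < h)}

theorem Walk.mem_lightBall [Fintype V] {G : SimpleGraph V} {h k : ℕ} {u v : V}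
    (p : G.Walk v u) (hlen : p.length ≤ k)
    (hlight : ∀ x ∈ p.support.dropLast, G.degree x < h) : u ∈ G.lightBall h k v := by
  refine ⟨p.length, p.getVert, hlen, p.getVert_zero, p.getVert_length,
    fun i hi => p.adj_getVert_succ hi, fun i hi => hlight _ ?_⟩
  rw [p.getVert_eq_support_getElem hi.le, ← List.getElem_dropLast]
  · exact List.getElem_mem _
  · simpa using hi

end SimpleGraph

section Copies

variable {A V : Type*}

theorem IsCopy.mono {H : SimpleGraph A} {G G' : SimpleGraph V} {f : A → V} (hf : IsCopy H G f)
    (hGG' : G ≤ G') : IsCopy H G' f :=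
  ⟨hf.1, fun a b hab => hGG' (hf.2 a b hab)⟩

def IsCopy.toHom {H : SimpleGraph A} {G : SimpleGraph V} {f : A → V} (hf : IsCopy H G f) :
    H →g G :=
  ⟨f, hf.2 _ _⟩

theorem IsCopy.containsCopy_induce {H : SimpleGraph A} {G : SimpleGraph V} {f : A → V}
    (hf : IsCopy H G f) {s : Set V} (hs : ∀ a, f a ∈ s) : ContainsCopy H (G.induce s) :=
  ⟨fun a => ⟨f a, hs a⟩, fun _ _ e => hf.1 (congrArg Subtype.val e), hf.2⟩

theorem FarFromFree.lt_card_mul [Fintype V] {H : SimpleGraph A} {G : SimpleGraph V} {c : ℝ}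
    (hfar : FarFromFree H G c) (hnbr : ∀ a, ∃ b, H.Adj a b)
    {W : Finset V} {d : ℕ} (hdeg : ∀ v ∈ W, G.degree v ≤ d)
    (hhit : ∀ f, IsCopy H G f → ∃ a, f a ∈ W) : c < W.card * d := by
  by_contra! hc
  set D := W.biUnion fun v => G.incidenceFinset v
  have hD : D.card ≤ W.card * d := calc
    D.card ≤ ∑ v ∈ W, (G.incidenceFinset v).card := card_biUnion_le
    _ ≤ ∑ _v ∈ W, d :=
      sum_le_sum fun v hv => (card_incidenceFinset_eq_degree G v).trans_le (hdeg v hv)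
    _ = W.card * d := by rw [sum_const, smul_eq_mul]
  obtain ⟨f, hf⟩ := hfar D ((Nat.cast_le.mpr hD).trans (by push_cast; exact hc))
  obtain ⟨a, haW⟩ := hhit f (hf.mono (deleteEdges_le _))
  obtain ⟨b, hab⟩ := hnbr a
  have hdel := (deleteEdges_adj).mp (hf.2 a b hab)
  exact hdel.2 <| mem_biUnion.mpr
    ⟨f a, haW, (mem_incidenceFinset _ _ _).mpr ⟨hdel.1, Sym2.mem_mk_left _ _⟩⟩

section LightBall

variable [Fintype A] [Fintype V] {H : SimpleGraph A} {G : SimpleGraph V} {f : A → V} {h k : ℕ}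

theorem IsCopy.mem_lightBall (hf : IsCopy H G f) (hsemi : G.IsSemiBipartite h)
    (hnbr : ∀ a, ∃ b, H.Adj a b) (hcard : Fintype.card A ≤ k)
    (hlight : (H.induce {a | G.degree (f a) < h}).Connected) {a₀ : A}
    (ha₀ : G.degree (f a₀) < h) (b : A) : f b ∈ G.lightBall h k (f a₀) := by
  set L := {a | G.degree (f a) < h}
  have reach : ∀ c ∈ L, ∃ p : G.Walk (f a₀) (f c),
      p.length < k ∧ ∀ x ∈ p.support, G.degree x < h := by
    intro c hc
    obtain ⟨w⟩ := hlight.preconnected ⟨a₀, ha₀⟩ ⟨c, hc⟩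
    let p := w.toPath.1.map (hf.toHom.comp (Embedding.induce L).toHom)
    have hlen : p.length < k := by
      rw [Walk.length_map]
      exact w.toPath.2.length_lt.trans_le ((Fintype.card_subtype_le _).trans hcard)
    have hsupp : ∀ x ∈ p.support, G.degree x < h := by
      intro x hx
      obtain ⟨y, -, rfl⟩ := List.mem_map.mp ((Walk.support_map _ _) ▸ hx)
      exact y.2
    exact ⟨p, hlen, hsupp⟩
  by_cases hb : G.degree (f b) < h
  · obtain ⟨p, hlen, hsupp⟩ := reach b hb
    exact p.mem_lightBall hlen.le fun x hx => hsupp x (List.dropLast_subset _ hx)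
  · obtain ⟨c, hbc⟩ := hnbr b
    have hc : G.degree (f c) < h :=
      lt_of_not_ge fun hc => hsemi _ _ (le_of_not_gt hb) hc (hf.2 b c hbc)
    obtain ⟨p, hlen, hsupp⟩ := reach c hc
    refine (p.concat (hf.2 c b hbc.symm)).mem_lightBall (by simpa using hlen) ?_
    rwa [Walk.support_concat, List.dropLast_concat]

theorem IsCopy.exists_containsCopy_induce_lightBall (hf : IsCopy H G f)
    (hsemi : G.IsSemiBipartite h) (hnbr : ∀ a, ∃ b, H.Adj a b) (hcard : Fintype.card A ≤ k)
    (hindep : ∀ S : Set A, (∀ a ∈ S, ∀ b ∈ S, ¬ H.Adj a b) → (H.induce Sᶜ).Connected) :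
    ∃ a, G.degree (f a) < h ∧ ContainsCopy H (G.induce (G.lightBall h k (f a))) := by
  have hlight : (H.induce {a | G.degree (f a) < h}).Connected := by
    have := hindep {a | G.degree (f a) < h}ᶜ
      fun a ha b hb hab => hsemi _ _ (not_lt.mp ha) (not_lt.mp hb) (hf.2 a b hab)
    rwa [compl_compl] at this
  obtain ⟨⟨a₀, ha₀⟩⟩ := hlight.nonempty
  exact ⟨a₀, ha₀, hf.containsCopy_induce (hf.mem_lightBall hsemi hnbr hcard hlight ha₀)⟩

end LightBall

end Copies

theorem statement_15_general {A V : Type*} [Fintype A] [Fintype V]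
    (k n h : ℕ) (hk : 2 ≤ k) (hh : 1 ≤ h) (ε : ℝ)
    (H : SimpleGraph A) (hA : Fintype.card A = k) (hconn : H.Connected)
    (hprop : ∀ S : Set A, (∀ a ∈ S, ∀ b ∈ S, ¬ H.Adj a b) → (H.induce Sᶜ).Connected)
    (G : SimpleGraph V)
    (hfar : FarFromFree H G (ε * n))
    (hsemi : ∀ u v : V, h ≤ G.degree u → h ≤ G.degree v → ¬ G.Adj u v)
    (B : V → Set V)
    (hB : ∀ v : V, B v = {u : V |
      ∃ (j : ℕ) (x : ℕ → V), j ≤ k ∧ x 0 = v ∧ x j = u ∧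
        (∀ i < j, G.Adj (x i) (x (i + 1))) ∧ (∀ i < j, G.degree (x i) < h)}) :
    ε * n / h <
      ((Finset.univ.filter fun v : V =>
        G.degree v < h ∧ ContainsCopy H (G.induce (B v))).card : ℝ) := by
  have : Nontrivial A := Fintype.one_lt_card_iff_nontrivial.mp (by omega)
  have hnbr : ∀ a, ∃ b, H.Adj a b := hconn.preconnected.exists_adj_of_nontrivial
  obtain rfl : B = G.lightBall h k := funext hB
  rw [div_lt_iff₀ (by exact_mod_cast hh)]
  refine hfar.lt_card_mul hnbr (fun v hv => (mem_filter.mp hv).2.1.le) fun f hf => ?_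
  obtain ⟨a, ha⟩ := hf.exists_containsCopy_induce_lightBall hsemi hnbr hA.le hprop
  exact ⟨a, mem_filter.mpr ⟨mem_univ _, ha⟩⟩

/-- Let `H` be a connected graph on `k ≥ 2` vertices such that removing
any independent set leaves a connected graph.  Suppose `G` on `n` vertices is `ε`-far from
being `H`-free and the set of vertices of degree at least `h` is independent in `G`.  For a
vertex `v`, let `B v` be the set of vertices reachable from `v` by a walk of length at most
`k` all of whose vertices except possibly the last have degree less than `h`.  Then more
than `ε·n/h` vertices `v` of degree less than `h` are such that the subgraph of `G` induced
on `B v` contains a copy of `H`. -/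
theorem statement_15 {A V : Type*} [Fintype A] [Fintype V] [DecidableEq V]
    (k n h : ℕ) (hk : 2 ≤ k) (hh : 1 ≤ h) (ε : ℝ) (hε : 0 < ε)
    (H : SimpleGraph A) (hA : Fintype.card A = k) (hconn : H.Connected)
    (hprop : ∀ S : Set A, (∀ a ∈ S, ∀ b ∈ S, ¬ H.Adj a b) → (H.induce Sᶜ).Connected)
    (G : SimpleGraph V) (hV : Fintype.card V = n)
    (hfar : FarFromFree H G (ε * n))
    (hsemi : ∀ u v : V, h ≤ G.degree u → h ≤ G.degree v → ¬ G.Adj u v)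
    (B : V → Set V)
    (hB : ∀ v : V, B v = {u : V |
      ∃ (j : ℕ) (x : ℕ → V), j ≤ k ∧ x 0 = v ∧ x j = u ∧
        (∀ i < j, G.Adj (x i) (x (i + 1))) ∧ (∀ i < j, G.degree (x i) < h)}) :
    ε * n / h <
      ((Finset.univ.filter fun v : V =>
        G.degree v < h ∧ ContainsCopy H (G.induce (B v))).card : ℝ) :=
  statement_15_general k n h hk hh ε H hA hconn hprop G hfar hsemi B hB
end
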